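/- With p_n(t) ∈ ℚ[t] defined by p_0(t) = t³, p_1(t) = -t², and p_n(t) = ((t³-1)/3)p_{n-1}'(t) - ((n+5)/6)t²p_{n-1}(t) - ((n-1)(n-2)/144)·t·p_{n-2}(t) for n ≥ 2, the numbers b(n) := -1728·6^n·p_n(0)/n! satisfy b(3) = 13824, b(6) = -39744, and b(9) = 1920024/35, and b(n) = 0 whenever n is not divisible by 3. -/
import Mathlib


open Polynomial

/-- The polynomials `p_n(t)`: `p_0 = t³`, `p_1 = -t²`, and for `n ≥ 2`,
`p_n = ((t³-1)/3) p_{n-1}' - ((n+5)/6) t² p_{n-1} - ((n-1)(n-2)/144) t p_{n-2}`. -/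
noncomputable def pSeq : ℕ → Polynomial ℚ
  | 0 => X ^ 3
  | 1 => -X ^ 2
  | (n + 2) =>
      C (1/3 : ℚ) * (X ^ 3 - 1) * derivative (pSeq (n + 1))
        - C (((n : ℚ) + 2 + 5) / 6) * X ^ 2 * pSeq (n + 1)
        - C ((((n : ℚ) + 2 - 1) * ((n : ℚ) + 2 - 2)) / 144) * X * pSeq n

/-- The coefficients `b(n) = -1728 · 6^n · p_n(0) / n!` of the elliptic expansion
of the `j`-function at `ρ`. -/
noncomputable def bCoeff (n : ℕ) : ℚ :=
  -1728 * 6 ^ n * (pSeq n).eval 0 / (n.factorial : ℚ)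

lemma coeff_step (n k : ℕ) : (pSeq (n+2)).coeff k =
    (1/3) * ((if 3 ≤ k then (pSeq (n+1)).coeff (k-3+1) * ((k-3 : ℕ)+1 : ℚ) else 0)
      - (pSeq (n+1)).coeff (k+1) * ((k : ℕ)+1 : ℚ))
    - (((n : ℚ)+7)/6) * (if 2 ≤ k then (pSeq (n+1)).coeff (k-2) else 0)
    - (((n : ℚ)+1)*(n : ℚ)/144) * (if 1 ≤ k then (pSeq n).coeff (k-1) else 0) := by
  have h : pSeq (n+2) = C (1/3 : ℚ) * (derivative (pSeq (n+1)) * X^3)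
      - C (1/3 : ℚ) * derivative (pSeq (n+1))
      - C (((n : ℚ)+7)/6) * (pSeq (n+1) * X^2)
      - C (((n : ℚ)+1)*(n : ℚ)/144) * (pSeq n * X^1) := by
    show C (1/3 : ℚ) * (X ^ 3 - 1) * derivative (pSeq (n + 1))
        - C (((n : ℚ) + 2 + 5) / 6) * X ^ 2 * pSeq (n + 1)
        - C ((((n : ℚ) + 2 - 1) * ((n : ℚ) + 2 - 2)) / 144) * X * pSeq n = _
    have e1 : ((n : ℚ) + 2 + 5) / 6 = ((n : ℚ)+7)/6 := by ring
    have e2 : (((n : ℚ) + 2 - 1) * ((n : ℚ) + 2 - 2)) / 144 = ((n : ℚ)+1)*(n : ℚ)/144 := by ring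
    rw [e1, e2]; ring
  rw [h]
  simp only [coeff_sub, coeff_C_mul, coeff_mul_X_pow', coeff_derivative]
  split_ifs <;> ring

lemma p0c (k : ℕ) : (pSeq 0).coeff k = if k = 3 then 1 else 0 := by
  rw [show pSeq 0 = X ^ 3 from rfl, coeff_X_pow]

lemma p1c (k : ℕ) : (pSeq 1).coeff k = if k = 2 then -1 else 0 := by
  rw [show pSeq 1 = -X ^ 2 from rfl, coeff_neg, coeff_X_pow]
  split_ifs <;> norm_num

/-- Coefficients of `pSeq n` vanish in degree `k` unless `3 ∣ n + k`. -/
lemma coeff_vanish : ∀ n k : ℕ, ¬ (3 ∣ (n + k)) → (pSeq n).coeff k = 0 := by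
  intro n
  induction n using Nat.strong_induction_on with
  | _ n ih =>
    match n with
    | 0 =>
      intro k hk
      rw [p0c, if_neg]
      omega
    | 1 =>
      intro k hk
      rw [p1c, if_neg]
      omega
    | (m + 2) =>
      intro k hk
      have h1 : (pSeq (m+1)).coeff (k+1) = 0 :=
        ih (m+1) (by omega) (k+1) (by omega)
      have A : (if 3 ≤ k then (pSeq (m+1)).coeff (k-3+1) * ((k-3 : ℕ)+1 : ℚ) else 0) = 0 := by
        split_ifs with h
        · rw [ih (m+1) (by omega) (k-3+1) (by omega)]; ring
        · rfl
      have B : (if 2 ≤ k then (pSeq (m+1)).coeff (k-2) else 0) = 0 := by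
        split_ifs with h
        · exact ih (m+1) (by omega) (k-2) (by omega)
        · rfl
      have C : (if 1 ≤ k then (pSeq m).coeff (k-1) else 0) = 0 := by
        split_ifs with h
        · exact ih m (by omega) (k-1) (by omega)
        · rfl
      rw [coeff_step, h1, A, B, C]
      ring

lemma c2_1 : (pSeq 2).coeff 1 = (2/3 : ℚ) := by
  rw [show (2:ℕ) = 0+2 from rfl, coeff_step]
  norm_num [p0c, p1c]

lemma c2_4 : (pSeq 2).coeff 4 = (1/2 : ℚ) := by
  rw [show (2:ℕ) = 0+2 from rfl, coeff_step]
  norm_num [p0c, p1c]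

lemma c2_7 : (pSeq 2).coeff 7 = (0/1 : ℚ) := by
  rw [show (2:ℕ) = 0+2 from rfl, coeff_step]
  norm_num [p0c, p1c]

lemma c3_0 : (pSeq 3).coeff 0 = (-2/9 : ℚ) := by
  rw [show (3:ℕ) = 1+2 from rfl, coeff_step]
  norm_num [p0c, p1c, c2_1]

lemma c3_3 : (pSeq 3).coeff 3 = (-95/72 : ℚ) := by
  rw [show (3:ℕ) = 1+2 from rfl, coeff_step]
  norm_num [p0c, p1c, c2_1, c2_4]

lemma c3_6 : (pSeq 3).coeff 6 = (0/1 : ℚ) := by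
  rw [show (3:ℕ) = 1+2 from rfl, coeff_step]
  norm_num [p0c, p1c, c2_4, c2_7]

lemma c4_2 : (pSeq 4).coeff 2 = (13/8 : ℚ) := by
  rw [show (4:ℕ) = 2+2 from rfl, coeff_step]
  norm_num [p0c, p1c, c2_1, c3_0, c3_3]

lemma c4_5 : (pSeq 4).coeff 5 = (23/36 : ℚ) := by
  rw [show (4:ℕ) = 2+2 from rfl, coeff_step]
  norm_num [p0c, p1c, c2_4, c3_3, c3_6]

lemma c5_1 : (pSeq 5).coeff 1 = (-115/108 : ℚ) := by
  rw [show (5:ℕ) = 3+2 from rfl, coeff_step]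
  norm_num [p0c, p1c, c3_0, c4_2]

lemma c5_4 : (pSeq 5).coeff 4 = (-743/288 : ℚ) := by
  rw [show (5:ℕ) = 3+2 from rfl, coeff_step]
  norm_num [p0c, p1c, c3_3, c4_2, c4_5]

lemma c6_0 : (pSeq 6).coeff 0 = (115/324 : ℚ) := by
  rw [show (6:ℕ) = 4+2 from rfl, coeff_step]
  norm_num [p0c, p1c, c5_1]

lemma c6_3 : (pSeq 6).coeff 3 = (4157/864 : ℚ) := by
  rw [show (6:ℕ) = 4+2 from rfl, coeff_step]
  norm_num [p0c, p1c, c4_2, c5_1, c5_4]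

lemma c7_2 : (pSeq 7).coeff 2 = (-1717/324 : ℚ) := by
  rw [show (7:ℕ) = 5+2 from rfl, coeff_step]
  norm_num [p0c, p1c, c5_1, c6_0, c6_3]

lemma c8_1 : (pSeq 8).coeff 1 = (2963/864 : ℚ) := by
  rw [show (8:ℕ) = 6+2 from rfl, coeff_step]
  norm_num [p0c, p1c, c6_0, c7_2]

lemma c9_0 : (pSeq 9).coeff 0 = (-2963/2592 : ℚ) := by
  rw [show (9:ℕ) = 7+2 from rfl, coeff_step]
  norm_num [p0c, p1c, c8_1]


/-- `b(3) = 13824`, `b(6) = -39744`, `b(9) = 1920024/35`, and `b(n) = 0` whenever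
`n` is not divisible by `3`. -/
theorem bCoeff_values :
    bCoeff 3 = 13824 ∧ bCoeff 6 = -39744 ∧ bCoeff 9 = 1920024 / 35 ∧
    ∀ n : ℕ, ¬ (3 ∣ n) → bCoeff n = 0 := by
  refine ⟨?_, ?_, ?_, ?_⟩
  · rw [bCoeff, ← coeff_zero_eq_eval_zero, c3_0]; norm_num [Nat.factorial]
  · rw [bCoeff, ← coeff_zero_eq_eval_zero, c6_0]; norm_num [Nat.factorial]
  · rw [bCoeff, ← coeff_zero_eq_eval_zero, c9_0]; norm_num [Nat.factorial]
  · intro n hn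
    rw [bCoeff, ← coeff_zero_eq_eval_zero, coeff_vanish n 0 (by simpa using hn)]
    simp
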